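/- arXiv:2011.02366 — 2 statements merged into one kernel-verified Lean document; each statement's English description precedes it below -/
import Mathlib

section
/- Let B₁, B₂, B₃, B₄ be k × k complex matrices satisfying the octonionic instanton equations [B_a, B_b] = (1/2) ε_{abcd} [B_c†, B_d†] for all a, b (with ε the totally antisymmetric symbol on {1,2,3,4}, ε_{1234} = 1). Then the matrices pairwise commute: [B_a, B_b] = 0 for all a, b. -/
open scoped Matrix

/-- The Levi-Civita symbol on four indices, with `ε 0 1 2 3 = 1`. -/
noncomputable def eps (a b c d : Fin 4) : ℂ :=
  ∑ σ : Equiv.Perm (Fin 4),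
    if σ 0 = a ∧ σ 1 = b ∧ σ 2 = c ∧ σ 3 = d then ((Equiv.Perm.sign σ : ℤ) : ℂ) else 0

/-- Integer-valued version of `eps`, for `decide`-based evaluation. -/
def epsZ (a b c d : Fin 4) : ℤ :=
  ∑ σ : Equiv.Perm (Fin 4),
    if σ 0 = a ∧ σ 1 = b ∧ σ 2 = c ∧ σ 3 = d then ((Equiv.Perm.sign σ : ℤ)) else 0

lemma eps_eq_cast (a b c d : Fin 4) : eps a b c d = ((epsZ a b c d : ℤ) : ℂ) := by
  unfold eps epsZ; push_cast; rfl

lemma eps_eq_zero {a b c d : Fin 4} (h : a = b ∨ a = c ∨ a = d ∨ b = c ∨ b = d ∨ c = d) :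
    eps a b c d = 0 := by
  unfold eps
  refine Finset.sum_eq_zero fun σ _ => ?_
  rw [if_neg]
  rintro ⟨h0, h1, h2, h3⟩
  subst h0 h1 h2 h3
  rcases h with h|h|h|h|h|h <;> exact absurd (σ.injective h) (by decide)

lemma eps_z1 (a c d : Fin 4) : eps a a c d = 0 := eps_eq_zero (Or.inl rfl)
lemma eps_z2 (a b d : Fin 4) : eps a b a d = 0 := eps_eq_zero (Or.inr (Or.inl rfl))
lemma eps_z3 (a b c : Fin 4) : eps a b c a = 0 := eps_eq_zero (Or.inr (Or.inr (Or.inl rfl)))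
lemma eps_z4 (a b d : Fin 4) : eps a b b d = 0 := eps_eq_zero (Or.inr (Or.inr (Or.inr (Or.inl rfl))))
lemma eps_z5 (a b c : Fin 4) : eps a b c b = 0 := eps_eq_zero (Or.inr (Or.inr (Or.inr (Or.inr (Or.inl rfl)))))
lemma eps_z6 (a b c : Fin 4) : eps a b c c = 0 := eps_eq_zero (Or.inr (Or.inr (Or.inr (Or.inr (Or.inr rfl)))))

lemma e0123 : eps 0 1 2 3 = 1 := by
  rw [eps_eq_cast, show epsZ 0 1 2 3 = 1 by decide]; norm_num
lemma e0132 : eps 0 1 3 2 = -1 := by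
  rw [eps_eq_cast, show epsZ 0 1 3 2 = -1 by decide]; norm_num
lemma e2301 : eps 2 3 0 1 = 1 := by
  rw [eps_eq_cast, show epsZ 2 3 0 1 = 1 by decide]; norm_num
lemma e2310 : eps 2 3 1 0 = -1 := by
  rw [eps_eq_cast, show epsZ 2 3 1 0 = -1 by decide]; norm_num
lemma e0213 : eps 0 2 1 3 = -1 := by
  rw [eps_eq_cast, show epsZ 0 2 1 3 = -1 by decide]; norm_num
lemma e0231 : eps 0 2 3 1 = 1 := by
  rw [eps_eq_cast, show epsZ 0 2 3 1 = 1 by decide]; norm_num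
lemma e1302 : eps 1 3 0 2 = -1 := by
  rw [eps_eq_cast, show epsZ 1 3 0 2 = -1 by decide]; norm_num
lemma e1320 : eps 1 3 2 0 = 1 := by
  rw [eps_eq_cast, show epsZ 1 3 2 0 = 1 by decide]; norm_num
lemma e0312 : eps 0 3 1 2 = 1 := by
  rw [eps_eq_cast, show epsZ 0 3 1 2 = 1 by decide]; norm_num
lemma e0321 : eps 0 3 2 1 = -1 := by
  rw [eps_eq_cast, show epsZ 0 3 2 1 = -1 by decide]; norm_num
lemma e1203 : eps 1 2 0 3 = 1 := by
  rw [eps_eq_cast, show epsZ 1 2 0 3 = 1 by decide]; norm_num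
lemma e1230 : eps 1 2 3 0 = -1 := by
  rw [eps_eq_cast, show epsZ 1 2 3 0 = -1 by decide]; norm_num

lemma trace_mul_conjTranspose_self' {k : ℕ} (X : Matrix (Fin k) (Fin k) ℂ) :
    Matrix.trace (X * Xᴴ) = ((∑ i, ∑ j, Complex.normSq (X i j) : ℝ) : ℂ) := by
  simp only [Matrix.trace, Matrix.diag, Matrix.mul_apply, Matrix.conjTranspose_apply,
    RCLike.star_def, Complex.mul_conj]
  push_cast
  rfl

lemma eq_zero_of_normSq_sum {k : ℕ} (X : Matrix (Fin k) (Fin k) ℂ)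
    (h : (∑ i, ∑ j, Complex.normSq (X i j)) = 0) : X = 0 := by
  ext i j
  have h1 : ∀ i ∈ Finset.univ, (∑ j, Complex.normSq (X i j)) = 0 :=
    (Finset.sum_eq_zero_iff_of_nonneg fun _ _ =>
      Finset.sum_nonneg fun _ _ => Complex.normSq_nonneg _).mp h
  have h2 : ∀ j ∈ Finset.univ, Complex.normSq (X i j) = 0 :=
    (Finset.sum_eq_zero_iff_of_nonneg fun _ _ => Complex.normSq_nonneg _).mp
      (h1 i (Finset.mem_univ i))
  simpa using Complex.normSq_eq_zero.mp (h2 j (Finset.mem_univ j))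

lemma trace_comm_mul {k : ℕ} (X Y Z : Matrix (Fin k) (Fin k) ℂ) :
    Matrix.trace ((X * Y - Y * X) * Z) = Matrix.trace (X * (Y * Z - Z * Y)) := by
  simp only [Matrix.sub_mul, Matrix.mul_sub, Matrix.trace_sub, ← mul_assoc]
  rw [Matrix.trace_mul_cycle Y X Z, Matrix.trace_mul_cycle Z Y X]

/-- If `B₁,…,B₄` are `k×k` complex matrices satisfying the octonionic instanton equations
`[B_a, B_b] = ½ ε_{abcd} [B_c†, B_d†]`, then they pairwise commute. -/
theorem stmt_6 (k : ℕ) (B : Fin 4 → Matrix (Fin k) (Fin k) ℂ)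
    (h : ∀ a b : Fin 4,
      B a * B b - B b * B a =
        (1 / 2 : ℂ) • ∑ c : Fin 4, ∑ d : Fin 4,
          eps a b c d • ((B c)ᴴ * (B d)ᴴ - (B d)ᴴ * (B c)ᴴ)) :
    ∀ a b : Fin 4, B a * B b - B b * B a = 0 := by
  have h01 : B 0 * B 1 - B 1 * B 0 = (B 2)ᴴ * (B 3)ᴴ - (B 3)ᴴ * (B 2)ᴴ := by
    have H := h 0 1
    simp only [Fin.sum_univ_four, eps_z1, eps_z2, eps_z3, eps_z4, eps_z5, eps_z6,
      e0123, e0132, one_smul, neg_smul, zero_smul, add_zero, zero_add] at H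
    rw [H]; module
  have h23 : B 2 * B 3 - B 3 * B 2 = (B 0)ᴴ * (B 1)ᴴ - (B 1)ᴴ * (B 0)ᴴ := by
    have H := h 2 3
    simp only [Fin.sum_univ_four, eps_z1, eps_z2, eps_z3, eps_z4, eps_z5, eps_z6,
      e2301, e2310, one_smul, neg_smul, zero_smul, add_zero, zero_add] at H
    rw [H]; module
  have h02 : B 0 * B 2 - B 2 * B 0 = (B 3)ᴴ * (B 1)ᴴ - (B 1)ᴴ * (B 3)ᴴ := by
    have H := h 0 2
    simp only [Fin.sum_univ_four, eps_z1, eps_z2, eps_z3, eps_z4, eps_z5, eps_z6,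
      e0213, e0231, one_smul, neg_smul, zero_smul, add_zero, zero_add] at H
    rw [H]; module
  have h13 : B 1 * B 3 - B 3 * B 1 = (B 2)ᴴ * (B 0)ᴴ - (B 0)ᴴ * (B 2)ᴴ := by
    have H := h 1 3
    simp only [Fin.sum_univ_four, eps_z1, eps_z2, eps_z3, eps_z4, eps_z5, eps_z6,
      e1302, e1320, one_smul, neg_smul, zero_smul, add_zero, zero_add] at H
    rw [H]; module
  have h03 : B 0 * B 3 - B 3 * B 0 = (B 1)ᴴ * (B 2)ᴴ - (B 2)ᴴ * (B 1)ᴴ := by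
    have H := h 0 3
    simp only [Fin.sum_univ_four, eps_z1, eps_z2, eps_z3, eps_z4, eps_z5, eps_z6,
      e0312, e0321, one_smul, neg_smul, zero_smul, add_zero, zero_add] at H
    rw [H]; module
  have h12 : B 1 * B 2 - B 2 * B 1 = (B 0)ᴴ * (B 3)ᴴ - (B 3)ᴴ * (B 0)ᴴ := by
    have H := h 1 2
    simp only [Fin.sum_univ_four, eps_z1, eps_z2, eps_z3, eps_z4, eps_z5, eps_z6,
      e1203, e1230, one_smul, neg_smul, zero_smul, add_zero, zero_add] at H
    rw [H]; module
  set C01 := B 0 * B 1 - B 1 * B 0 with hC01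
  set C23 := B 2 * B 3 - B 3 * B 2 with hC23
  set C02 := B 0 * B 2 - B 2 * B 0 with hC02
  set C13 := B 1 * B 3 - B 3 * B 1 with hC13
  set C03 := B 0 * B 3 - B 3 * B 0 with hC03
  set C12 := B 1 * B 2 - B 2 * B 1 with hC12
  have h01' : C01ᴴ = -C23 := by
    rw [h01]
    simp only [Matrix.conjTranspose_sub, Matrix.conjTranspose_mul,
      Matrix.conjTranspose_conjTranspose, hC23]
    abel
  have h23' : C23ᴴ = -C01 := by
    rw [h23]
    simp only [Matrix.conjTranspose_sub, Matrix.conjTranspose_mul,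
      Matrix.conjTranspose_conjTranspose, hC01]
    abel
  have h02' : C02ᴴ = C13 := by
    rw [h02]
    simp only [Matrix.conjTranspose_sub, Matrix.conjTranspose_mul,
      Matrix.conjTranspose_conjTranspose, hC13]
  have h13' : C13ᴴ = C02 := by
    rw [h13]
    simp only [Matrix.conjTranspose_sub, Matrix.conjTranspose_mul,
      Matrix.conjTranspose_conjTranspose, hC02]
  have h03' : C03ᴴ = -C12 := by
    rw [h03]
    simp only [Matrix.conjTranspose_sub, Matrix.conjTranspose_mul,
      Matrix.conjTranspose_conjTranspose, hC12]
    abel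
  have h12' : C12ᴴ = -C03 := by
    rw [h12]
    simp only [Matrix.conjTranspose_sub, Matrix.conjTranspose_mul,
      Matrix.conjTranspose_conjTranspose, hC03]
    abel
  -- Jacobi identity under the trace
  have jac : Matrix.trace (C01 * C23) + Matrix.trace (C02 * (B 3 * B 1 - B 1 * B 3))
      + Matrix.trace (C03 * C12) = 0 := by
    rw [hC01, hC02, hC03, hC12, hC23]
    rw [trace_comm_mul (B 0) (B 1), trace_comm_mul (B 0) (B 2), trace_comm_mul (B 0) (B 3)]
    simp only [← Matrix.trace_add, ← Matrix.mul_add]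
    have hz : (B 1 * (B 2 * B 3 - B 3 * B 2) - (B 2 * B 3 - B 3 * B 2) * B 1) +
        (B 2 * (B 3 * B 1 - B 1 * B 3) - (B 3 * B 1 - B 1 * B 3) * B 2) +
        (B 3 * (B 1 * B 2 - B 2 * B 1) - (B 1 * B 2 - B 2 * B 1) * B 3) = 0 := by
      noncomm_ring
    rw [hz, Matrix.mul_zero, Matrix.trace_zero]
  have hflip : B 3 * B 1 - B 1 * B 3 = -C13 := by rw [hC13]; abel
  have jac' : Matrix.trace (C01 * C23) - Matrix.trace (C02 * C13)
      + Matrix.trace (C03 * C12) = 0 := by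
    rw [hflip, Matrix.mul_neg, Matrix.trace_neg] at jac
    linear_combination jac
  -- trace positivity bookkeeping
  have t01 : ((∑ i, ∑ j, Complex.normSq (C01 i j) : ℝ) : ℂ) = -Matrix.trace (C01 * C23) := by
    rw [← trace_mul_conjTranspose_self', h01', Matrix.mul_neg, Matrix.trace_neg]
  have t23 : ((∑ i, ∑ j, Complex.normSq (C23 i j) : ℝ) : ℂ) = -Matrix.trace (C01 * C23) := by
    rw [← trace_mul_conjTranspose_self', h23', Matrix.mul_neg, Matrix.trace_neg,
      Matrix.trace_mul_comm]
  have t02 : ((∑ i, ∑ j, Complex.normSq (C02 i j) : ℝ) : ℂ) = Matrix.trace (C02 * C13) := by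
    rw [← trace_mul_conjTranspose_self', h02']
  have t13 : ((∑ i, ∑ j, Complex.normSq (C13 i j) : ℝ) : ℂ) = Matrix.trace (C02 * C13) := by
    rw [← trace_mul_conjTranspose_self', h13', Matrix.trace_mul_comm]
  have t03 : ((∑ i, ∑ j, Complex.normSq (C03 i j) : ℝ) : ℂ) = -Matrix.trace (C03 * C12) := by
    rw [← trace_mul_conjTranspose_self', h03', Matrix.mul_neg, Matrix.trace_neg]
  have t12 : ((∑ i, ∑ j, Complex.normSq (C12 i j) : ℝ) : ℂ) = -Matrix.trace (C03 * C12) := by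
    rw [← trace_mul_conjTranspose_self', h12', Matrix.mul_neg, Matrix.trace_neg,
      Matrix.trace_mul_comm]
  have totalC : (((∑ i, ∑ j, Complex.normSq (C01 i j)) + (∑ i, ∑ j, Complex.normSq (C23 i j))
      + (∑ i, ∑ j, Complex.normSq (C02 i j)) + (∑ i, ∑ j, Complex.normSq (C13 i j))
      + (∑ i, ∑ j, Complex.normSq (C03 i j)) + (∑ i, ∑ j, Complex.normSq (C12 i j)) : ℝ) : ℂ)
      = 0 := by
    simp only [Complex.ofReal_add]
    rw [t01, t23, t02, t13, t03, t12]
    linear_combination -2 * jac'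
  have total : (∑ i, ∑ j, Complex.normSq (C01 i j)) + (∑ i, ∑ j, Complex.normSq (C23 i j))
      + (∑ i, ∑ j, Complex.normSq (C02 i j)) + (∑ i, ∑ j, Complex.normSq (C13 i j))
      + (∑ i, ∑ j, Complex.normSq (C03 i j)) + (∑ i, ∑ j, Complex.normSq (C12 i j)) = 0 := by
    exact_mod_cast totalC
  have nn : ∀ X : Matrix (Fin k) (Fin k) ℂ, 0 ≤ ∑ i, ∑ j, Complex.normSq (X i j) :=
    fun X => Finset.sum_nonneg fun _ _ => Finset.sum_nonneg fun _ _ => Complex.normSq_nonneg _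
  have z01 : C01 = 0 := eq_zero_of_normSq_sum _ (by
    have := nn C01; have := nn C23; have := nn C02; have := nn C13; have := nn C03
    have := nn C12; linarith)
  have z23 : C23 = 0 := eq_zero_of_normSq_sum _ (by
    have := nn C01; have := nn C23; have := nn C02; have := nn C13; have := nn C03
    have := nn C12; linarith)
  have z02 : C02 = 0 := eq_zero_of_normSq_sum _ (by
    have := nn C01; have := nn C23; have := nn C02; have := nn C13; have := nn C03
    have := nn C12; linarith)
  have z13 : C13 = 0 := eq_zero_of_normSq_sum _ (by
    have := nn C01; have := nn C23; have := nn C02; have := nn C13; have := nn C03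
    have := nn C12; linarith)
  have z03 : C03 = 0 := eq_zero_of_normSq_sum _ (by
    have := nn C01; have := nn C23; have := nn C02; have := nn C13; have := nn C03
    have := nn C12; linarith)
  have z12 : C12 = 0 := eq_zero_of_normSq_sum _ (by
    have := nn C01; have := nn C23; have := nn C02; have := nn C13; have := nn C03
    have := nn C12; linarith)
  rw [hC01] at z01; rw [hC23] at z23; rw [hC02] at z02
  rw [hC13] at z13; rw [hC03] at z03; rw [hC12] at z12
  have flip : ∀ a b : Fin 4, B a * B b - B b * B a = 0 → B b * B a - B a * B b = 0 := by
    intro a b hab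
    rw [← neg_sub, hab, neg_zero]
  intro a b
  fin_cases a <;> fin_cases b <;>
    first
      | exact sub_self _
      | exact z01 | exact z23 | exact z02 | exact z13 | exact z03 | exact z12
      | exact flip _ _ z01 | exact flip _ _ z23 | exact flip _ _ z02
      | exact flip _ _ z13 | exact flip _ _ z03 | exact flip _ _ z12
end

section
/- Let B₁, B₂ be commuting k×k complex matrices and I a k×1 column vector. Suppose ξ(z₁,z₂) is a polynomial such that there exist vector-valued polynomials ψ₁, ψ₂ with I·ξ(z₁,z₂) = (z₂ − B₂)ψ₁(z₁,z₂) + (z₁ − B₁)ψ₂(z₁,z₂) identically. Then ξ(B₁, B₂)·v = 0 for every vector v in the smallest B₁,B₂-invariant subspace containing the image of I; in particular if ℂ^k is generated by I under B₁,B₂ (stability), then ξ(B₁,B₂) = 0. -/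
/-!
Evaluate vector-valued polynomials at `(B₁, B₂)` from the left, `ψ ↦ ψ(B) := ∑ₘ Bᵐ ψₘ`. This is
additive, sends `p ψ` to `p(B) ψ(B)` and, because every `ψⱼ(B)` commutes with `B_a`, sends the
constant-matrix action `B_a ψ` to `B_a ψ(B)`; hence it kills `(z_a − B_a) ψ`, while it sends
`I ξ` to `ξ(B) I`. So `ξ(B) I = 0`, and since `ξ(B)` commutes with `B₁, B₂`, its kernel is an
invariant subspace containing `I`.
-/

open MvPolynomial Matrix

namespace MvPolynomial

open scoped IsMulCommutative

variable {R A σ : Type*} [CommSemiring R] [Semiring A] [Algebra R A]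

noncomputable def commAeval (B : σ → A) (hB : ∀ i j, Commute (B i) (B j)) :
    MvPolynomial σ R →ₐ[R] A :=
  haveI := Algebra.isMulCommutative_adjoin R (s := Set.range B) (by
    rintro _ ⟨i, rfl⟩ _ ⟨j, rfl⟩; exact hB i j)
  (Algebra.adjoin R (Set.range B)).val.comp
    (aeval fun i => ⟨B i, Algebra.subset_adjoin (Set.mem_range_self i)⟩)

variable (B : σ → A) (hB : ∀ i j, Commute (B i) (B j))

theorem commAeval_X (i : σ) : commAeval (R := R) B hB (X i) = B i := by
  simp [commAeval]

theorem commute_commAeval (i : σ) (p : MvPolynomial σ R) :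
    Commute (B i) (commAeval B hB p) := by
  refine Algebra.commute_of_mem_adjoin_of_forall_mem_commute (Subtype.prop _) ?_
  rintro _ ⟨j, rfl⟩
  exact hB i j

theorem commAeval_fin_two_eq_sum (B₁ B₂ : A) (hB : ∀ i j, Commute (![B₁, B₂] i) (![B₁, B₂] j))
    (p : MvPolynomial (Fin 2) R) :
    commAeval ![B₁, B₂] hB p =
      ∑ m ∈ p.support, p.coeff m • (B₁ ^ m 0 * B₂ ^ m 1) := by
  simp [commAeval, aeval_def, eval₂_eq', Fin.prod_univ_two, Algebra.smul_def]

end MvPolynomial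

namespace Matrix

variable {R S n : Type*} [CommRing R] [Fintype n]

theorem mulVec_eq_zero_of_mem_invariant {F B₁ B₂ : Matrix n n R} {I v : n → R}
    (h₁ : Commute F B₁) (h₂ : Commute F B₂) (hI : F *ᵥ I = 0)
    (hv : ∀ W : Submodule R (n → R), (∀ w ∈ W, B₁ *ᵥ w ∈ W ∧ B₂ *ᵥ w ∈ W) → I ∈ W → v ∈ W) :
    F *ᵥ v = 0 := by
  refine hv (LinearMap.ker F.mulVecLin) (fun w hw => ?_) hI
  have hFB : ∀ B, Commute F B → F *ᵥ (B *ᵥ w) = 0 := fun B h => by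
    rw [mulVec_mulVec, h.eq, ← mulVec_mulVec, show F *ᵥ w = 0 from hw, mulVec_zero]
  exact ⟨hFB B₁ h₁, hFB B₂ h₂⟩

variable [DecidableEq n]

section Ring

variable [Ring S] [Algebra R S]

/-- For `ψ = ∑ₘ zᵐ ψₘ` with `ψₘ ∈ Rⁿ`, this is the left evaluation `∑ₘ φ(zᵐ) ψₘ`. -/
noncomputable def vecEval (φ : S →ₐ[R] Matrix n n R) : (n → S) →+ (n → R) where
  toFun ψ := ∑ i, φ (ψ i) *ᵥ Pi.single i 1
  map_zero' := by simp only [Pi.zero_apply, map_zero, zero_mulVec, Finset.sum_const_zero]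
  map_add' ψ χ := by simp only [Pi.add_apply, map_add, add_mulVec, Finset.sum_add_distrib]

variable (φ : S →ₐ[R] Matrix n n R)

theorem vecEval_apply (ψ : n → S) : vecEval φ ψ = ∑ i, φ (ψ i) *ᵥ Pi.single i 1 := rfl

theorem vecEval_mul_left (s : S) (ψ : n → S) :
    vecEval φ (fun i => s * ψ i) = φ s *ᵥ vecEval φ ψ := by
  simp only [vecEval_apply, map_mul, mulVec_sum, mulVec_mulVec]

theorem vecEval_algebraMap_mul (v : n → R) (s : S) :
    vecEval φ (fun i => algebraMap R S (v i) * s) = φ s *ᵥ v := by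
  simp only [vecEval_apply, ← Algebra.smul_def, map_smul, smul_mulVec, ← mulVec_smul,
    ← mulVec_sum, ← pi_eq_sum_univ']

theorem vecEval_matrix_mul (B : Matrix n n R) (ψ : n → S) (hB : ∀ j, Commute B (φ (ψ j))) :
    vecEval φ (fun i => ∑ j, algebraMap R S (B i j) * ψ j) = B *ᵥ vecEval φ ψ := by
  calc vecEval φ (fun i => ∑ j, algebraMap R S (B i j) * ψ j)
      = ∑ j, vecEval φ (fun i => algebraMap R S (B i j) * ψ j) := by
        rw [← map_sum]; congr 1; ext; simp only [Finset.sum_apply]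
    _ = ∑ j, φ (ψ j) *ᵥ (B *ᵥ Pi.single j 1) := by
        simp only [vecEval_algebraMap_mul, mulVec_single_one]; rfl
    _ = B *ᵥ vecEval φ ψ := by
        simp only [vecEval_apply, mulVec_sum, mulVec_mulVec, (hB _).eq]

end Ring

section CommRing

variable [CommRing S] [Algebra R S] (φ : S →ₐ[R] Matrix n n R)

theorem vecEval_mul_sub_eq_zero (s : S) (ψ : n → S) :
    vecEval φ (fun i => s * ψ i - ∑ j, algebraMap R S (φ s i j) * ψ j) = 0 := by
  rw [show (fun i => s * ψ i - ∑ j, algebraMap R S (φ s i j) * ψ j) =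
    (fun i => s * ψ i) - fun i => ∑ j, algebraMap R S (φ s i j) * ψ j from rfl, map_sub,
    vecEval_mul_left, vecEval_matrix_mul φ _ ψ fun j => (Commute.all s (ψ j)).map φ, sub_self]

theorem mulVec_eq_zero_of_eq_residue {ξ p₁ p₂ : S} {v : n → R} {ψ₁ ψ₂ : n → S}
    (hres : ∀ i, algebraMap R S (v i) * ξ =
      (p₁ * ψ₁ i - ∑ j, algebraMap R S (φ p₁ i j) * ψ₁ j) +
        (p₂ * ψ₂ i - ∑ j, algebraMap R S (φ p₂ i j) * ψ₂ j)) :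
    φ ξ *ᵥ v = 0 :=
  calc φ ξ *ᵥ v = vecEval φ (fun i => algebraMap R S (v i) * ξ) :=
        (vecEval_algebraMap_mul φ v ξ).symm
    _ = vecEval φ ((fun i => p₁ * ψ₁ i - ∑ j, algebraMap R S (φ p₁ i j) * ψ₁ j) +
          fun i => p₂ * ψ₂ i - ∑ j, algebraMap R S (φ p₂ i j) * ψ₂ j) :=
        congrArg _ (funext hres)
    _ = 0 := by rw [map_add, vecEval_mul_sub_eq_zero, vecEval_mul_sub_eq_zero, add_zero]

end CommRing

end Matrix

/-- The key step (eqs. 59–62) of the instanton/ideal correspondence on ℝ⁴: if `B₁, B₂` are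
commuting `k×k` matrices, `I` a vector, and `ξ ∈ ℂ[z₁,z₂]` satisfies
`I·ξ = (z₂ − B₂)ψ₁ + (z₁ − B₁)ψ₂` for some vector-valued polynomials `ψ₁, ψ₂`, then
`ξ(B₁,B₂)` annihilates the smallest `B₁,B₂`-invariant subspace containing `I`; in
particular, if `ℂᵏ` is cyclic for `I` (stability), then `ξ(B₁,B₂) = 0`. -/
theorem stmt_19 (k : ℕ) (B₁ B₂ : Matrix (Fin k) (Fin k) ℂ)
    (hcomm : B₁ * B₂ = B₂ * B₁) (I : Fin k → ℂ)
    (ξ : MvPolynomial (Fin 2) ℂ) (ψ₁ ψ₂ : Fin k → MvPolynomial (Fin 2) ℂ)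
    (hres : ∀ i : Fin k,
      C (I i) * ξ =
        (X 1 * ψ₁ i - ∑ j, C (B₂ i j) * ψ₁ j) + (X 0 * ψ₂ i - ∑ j, C (B₁ i j) * ψ₂ j)) :
    (∀ v : Fin k → ℂ,
      (∀ W : Submodule ℂ (Fin k → ℂ),
        (∀ w ∈ W, B₁.mulVec w ∈ W ∧ B₂.mulVec w ∈ W) → I ∈ W → v ∈ W) →
      (∑ m ∈ ξ.support, ξ.coeff m • (B₁ ^ m 0 * B₂ ^ m 1)).mulVec v = 0) ∧
    ((∀ v : Fin k → ℂ, ∀ W : Submodule ℂ (Fin k → ℂ),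
        (∀ w ∈ W, B₁.mulVec w ∈ W ∧ B₂.mulVec w ∈ W) → I ∈ W → v ∈ W) →
      (∑ m ∈ ξ.support, ξ.coeff m • (B₁ ^ m 0 * B₂ ^ m 1)) = 0) := by
  have hB : ∀ i j : Fin 2, Commute (![B₁, B₂] i) (![B₁, B₂] j) := by
    simp only [Fin.forall_fin_two, cons_val_zero, cons_val_one, Commute.refl, true_and, and_true]
    exact ⟨hcomm, hcomm.symm⟩
  rw [← commAeval_fin_two_eq_sum B₁ B₂ hB ξ]
  set φ := commAeval (R := ℂ) ![B₁, B₂] hB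
  have hξI : φ ξ *ᵥ I = 0 := by
    refine mulVec_eq_zero_of_eq_residue φ (p₁ := X 1) (p₂ := X 0) (ψ₁ := ψ₁) (ψ₂ := ψ₂)
      fun i => ?_
    simpa only [φ, commAeval_X, cons_val_zero, cons_val_one, ← algebraMap_eq] using hres i
  have hann : ∀ v : Fin k → ℂ, (∀ W : Submodule ℂ (Fin k → ℂ),
      (∀ w ∈ W, B₁ *ᵥ w ∈ W ∧ B₂ *ᵥ w ∈ W) → I ∈ W → v ∈ W) → φ ξ *ᵥ v = 0 :=
    fun v => mulVec_eq_zero_of_mem_invariant (commute_commAeval _ hB 0 ξ).symm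
      (commute_commAeval _ hB 1 ξ).symm hξI
  exact ⟨hann, fun hv => ext_iff_mulVec.2 fun v => by
    simpa only [zero_mulVec] using hann v (hv v)⟩
end
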